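/- Let T be a search tree on a tree G, let v be a node, and let p be the parent of v. Then at most one child c of v satisfies p ∈ ∂(T_c). -/

import Mathlib

open SimpleGraph

variable {V : Type*}

/-- Reachability within a vertex set `S`. -/
def reachIn (G : SimpleGraph V) (S : Set V) : V → V → Prop :=
  Relation.ReflTransGen (fun x y => x ∈ S ∧ y ∈ S ∧ G.Adj x y)

/-- The connected component of `v` inside the vertex set `S`. -/
def compIn (G : SimpleGraph V) (S : Set V) (v : V) : Set V :=
  {u | reachIn G S v u}

/-- `IsSearchTree G par S r`: the parent map `par` describes a search tree with root `r`
on the part of `G` induced by `S`, built recursively: the root `r` is chosen, and each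
connected component of `S \ {r}` carries a search tree whose root is a child of `r`. -/
inductive IsSearchTree (G : SimpleGraph V) (par : V → Option V) : Set V → V → Prop where
  | node (S : Set V) (r : V) (ρ : V → V) (hr : r ∈ S)
      (hρ : ∀ v ∈ S, v ≠ r → par (ρ v) = some r)
      (h : ∀ v ∈ S, v ≠ r → IsSearchTree G par (compIn G (S \ {r}) v) (ρ v)) :
      IsSearchTree G par S r

/-- `isAnc par a v`: `a` is an ancestor of `v` (reflexively). -/
def isAnc (par : V → Option V) (a v : V) : Prop :=
  Relation.ReflTransGen (fun x y => par x = some y) v a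

/-- The subtree rooted at `v`: all descendants of `v` (including `v`). -/
def subtree (par : V → Option V) (v : V) : Set V := {u | isAnc par v u}

/-- The outer boundary `∂(T_v)` of the subtree rooted at `v`. -/
def bdry (G : SimpleGraph V) (par : V → Option V) (v : V) : Set V :=
  {x | x ∉ subtree par v ∧ ∃ u ∈ subtree par v, G.Adj x u}

/-- A search tree is 2-cut if every subtree boundary has size at most 2. -/
def TwoCut (G : SimpleGraph V) (par : V → Option V) : Prop :=
  ∀ v, (bdry G par v).ncard ≤ 2

open Classical in
/-- The STT rotation of `v` with its parent `p`: `p` becomes a child of `v`, `v` takes the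
former parent of `p`, and any child `c` of `v` with `p ∈ ∂(T_c)` is reattached to `p`. -/
noncomputable def rotate (G : SimpleGraph V) (par : V → Option V) (v p : V) :
    V → Option V := fun x =>
  if x = v then par p
  else if x = p then some v
  else if par x = some v ∧ p ∈ bdry G par x then some p
  else par x

/-- A splay step at `x`: a single rotation if `x` has no grandparent; a ZIG-ZAG
(two rotations at `x`) if `x` is a separator; a ZIG-ZIG (rotation at the parent,
then at `x`) otherwise. -/
noncomputable def splayStep (G : SimpleGraph V) (par : V → Option V) (x : V) :
    V → Option V :=
  match par x with
  | none => par
  | some p =>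
    match par p with
    | none => rotate G par x p
    | some g =>
      if (bdry G par x).ncard = 2 then
        rotate G (rotate G par x p) x g
      else
        rotate G (rotate G par p g) x p


/-! The vertex set `T` of the recursion level at which `v` is chosen as root is connected and
avoids the parent `p` of `v`, and every child `c` of `v` is the root of its own connected
component of `T \ {v}`, which contains the subtree `T_c`. If `p` is adjacent to `u ∈ T_c` and to
`u' ∈ T_{c'}`, then `u` and `u'` are joined inside `T`, hence in `G - p`; acyclicity of `G`
forces `u = u'`, so the components of `c` and `c'` coincide and `c = c'`. -/

section ReachIn

variable {G : SimpleGraph V} {X : Set V} {a b w : V}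

lemma reachIn.eq_or_mem (h : reachIn G X a b) : b = a ∨ b ∈ X := by
  induction h with
  | refl => exact Or.inl rfl
  | tail _ hstep _ => exact Or.inr hstep.2.1

lemma reachIn.symm (h : reachIn G X a b) : reachIn G X b a := by
  induction h with
  | refl => exact .refl
  | tail _ hstep ih => exact .head ⟨hstep.2.1, hstep.1, hstep.2.2.symm⟩ ih

lemma reachIn.to_compIn (h : reachIn G X a b) : reachIn G (compIn G X a) a b := by
  induction h with
  | refl => exact .refl
  | tail hab hstep ih => exact ih.tail ⟨hab, hab.tail hstep, hstep.2.2⟩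

lemma reachIn.exists_walk (h : reachIn G X a b) :
    ∃ W : G.Walk a b, ∀ z ∈ W.support, z = a ∨ z ∈ X := by
  induction h with
  | refl => exact ⟨.nil, by simp⟩
  | @tail b c _ hstep ih =>
    obtain ⟨W, hW⟩ := ih
    refine ⟨W.concat hstep.2.2, fun z hz => ?_⟩
    rw [Walk.support_concat, List.mem_append, List.mem_singleton] at hz
    exact hz.elim (hW z) fun hzc => Or.inr (hzc ▸ hstep.2.1)

lemma reachIn_univ_of_reachable (h : G.Reachable a b) : reachIn G Set.univ a b := by
  obtain ⟨W⟩ := h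
  induction W with
  | nil => exact .refl
  | cons hadj _ ih => exact .head ⟨trivial, trivial, hadj⟩ ih

lemma mem_compIn_self : a ∈ compIn G X a := Relation.ReflTransGen.refl

lemma compIn_subset (ha : a ∈ X) : compIn G X a ⊆ X := fun _ hb =>
  (reachIn.eq_or_mem hb).elim (· ▸ ha) id

lemma compIn_eq_of_mem (hb : b ∈ compIn G X a) : compIn G X b = compIn G X a :=
  Set.ext fun _ =>
    ⟨Relation.ReflTransGen.trans hb, Relation.ReflTransGen.trans (reachIn.symm hb)⟩

lemma reachIn_compIn (ha : a ∈ compIn G X w) (hb : b ∈ compIn G X w) :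
    reachIn G (compIn G X w) a b :=
  (reachIn.to_compIn ha).symm.trans (reachIn.to_compIn hb)

end ReachIn

theorem SimpleGraph.IsAcyclic.eq_of_adj_of_reachIn {G : SimpleGraph V} (hG : G.IsAcyclic)
    {X : Set V} {x a b : V} (hx : x ∉ X) (ha : G.Adj x a) (hb : G.Adj x b)
    (hab : reachIn G X a b) : a = b := by
  classical
  obtain ⟨W, hW⟩ := hab.exists_walk
  have hxW : x ∉ W.bypass.support := fun hxW =>
    (hW x (W.support_bypass_subset_support hxW)).elim ha.ne hx
  have hpath : (Walk.cons ha W.bypass).IsPath := W.bypass_isPath.cons hxW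
  have hba := hG.eq_snd_of_adj_start hpath hb (Walk.end_mem_support _)
  rw [Walk.snd_cons] at hba
  exact hba.symm

namespace IsSearchTree

variable {G : SimpleGraph V} {par : V → Option V} {S : Set V} {r x y : V}

lemma root_mem (h : IsSearchTree G par S r) : r ∈ S := by
  cases h with | node _ _ _ hr => exact hr

lemma parent_mem (h : IsSearchTree G par S r) (hx : x ∈ S) (hxr : x ≠ r)
    (hxy : par x = some y) : y ∈ S := by
  induction h with
  | node S r ρ hr hρ hsub ih =>
    by_cases hroot : x = ρ x
    · have hρx := hρ x hx hxr
      rw [← hroot, hxy, Option.some.injEq] at hρx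
      exact hρx ▸ hr
    · have hyC := ih x hx hxr mem_compIn_self hroot
      exact (compIn_subset (show x ∈ S \ {r} from ⟨hx, hxr⟩) hyC).1

lemma eq_root_of_parent_notMem (h : IsSearchTree G par S r) (hx : x ∈ S)
    (hxy : par x = some y) (hy : y ∉ S) : x = r :=
  by_contra fun hxr => hy (h.parent_mem hx hxr hxy)

lemma parent_eq_root_or_mem_compIn (h : IsSearchTree G par S r) (hx : x ∈ S) (hxr : x ≠ r)
    (hxy : par x = some y) : y = r ∨ y ∈ compIn G (S \ {r}) x := by
  obtain ⟨_, _, ρ, _, hρ, hsub⟩ := h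
  by_cases hroot : x = ρ x
  · have hρx := hρ x hx hxr
    rw [← hroot, hxy, Option.some.injEq] at hρx
    exact .inl hρx
  · exact .inr ((hsub x hx hxr).parent_mem mem_compIn_self hroot hxy)

end IsSearchTree

/-- `S` is the vertex set `V(T_r)` of the recursion level of a search tree at which `r` is
chosen as root. -/
structure IsSearchSubtree (G : SimpleGraph V) (par : V → Option V) (S : Set V) (r : V) :
    Prop where
  isSearchTree : IsSearchTree G par S r
  mem_of_parent_mem : ∀ ⦃x y⦄, par x = some y → y ∈ S → x ∈ S
  parent_root_notMem : ∀ ⦃y⦄, par r = some y → y ∉ S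
  reachIn_of_mem : ∀ ⦃a b⦄, a ∈ S → b ∈ S → reachIn G S a b

namespace IsSearchSubtree

variable {G : SimpleGraph V} {par : V → Option V} {S : Set V} {r : V}

lemma univ (hG : G.Connected) (hroot : par r = none) (hT : IsSearchTree G par Set.univ r) :
    IsSearchSubtree G par Set.univ r where
  isSearchTree := hT
  mem_of_parent_mem _ _ _ _ := trivial
  parent_root_notMem _ hy := by simp [hroot] at hy
  reachIn_of_mem a b _ _ := reachIn_univ_of_reachable (hG.preconnected a b)

lemma subtree_subset (h : IsSearchSubtree G par S r) : subtree par r ⊆ S := fun _ hu =>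
  Relation.ReflTransGen.head_induction_on hu h.isSearchTree.root_mem
    fun hxy _ hy => h.mem_of_parent_mem hxy hy

lemma component {w r' : V} (h : IsSearchSubtree G par S r) (hw : w ∈ S \ {r})
    (hT : IsSearchTree G par (compIn G (S \ {r}) w) r') (hr' : par r' = some r) :
    IsSearchSubtree G par (compIn G (S \ {r}) w) r' where
  isSearchTree := hT
  mem_of_parent_mem x y hxy hy := by
    have hyS : y ∈ S \ {r} := compIn_subset hw hy
    have hxS : x ∈ S := h.mem_of_parent_mem hxy hyS.1
    have hxr : x ≠ r := fun hxr => h.parent_root_notMem (hxr ▸ hxy) hyS.1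
    rcases h.isSearchTree.parent_eq_root_or_mem_compIn hxS hxr hxy with hyr | hyx
    · exact absurd hyr hyS.2
    · exact compIn_eq_of_mem hy ▸ reachIn.symm hyx
  parent_root_notMem y hy hyC := by
    rw [hr', Option.some.injEq] at hy
    exact (compIn_subset hw hyC).2 hy.symm
  reachIn_of_mem _ _ := reachIn_compIn

lemma exists_of_mem {v : V} (h : IsSearchSubtree G par S r) (hv : v ∈ S) :
    ∃ T, IsSearchSubtree G par T v := by
  obtain ⟨hT, hclosed, hroot, hconn⟩ := h
  induction hT with
  | node S r ρ hr hρ hsub ih =>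
    have hS : IsSearchSubtree G par S r := ⟨.node S r ρ hr hρ hsub, hclosed, hroot, hconn⟩
    by_cases hvr : v = r
    · exact ⟨S, hvr ▸ hS⟩
    · have hC := hS.component ⟨hv, hvr⟩ (hsub v hv hvr) (hρ v hv hvr)
      exact ih v hv hvr mem_compIn_self hC.mem_of_parent_mem hC.parent_root_notMem
        hC.reachIn_of_mem

lemma child_mem {c : V} (h : IsSearchSubtree G par S r) (hc : par c = some r) : c ∈ S \ {r} :=
  have hr := h.isSearchTree.root_mem
  ⟨h.mem_of_parent_mem hc hr, fun hcr => h.parent_root_notMem (hcr ▸ hc) hr⟩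

lemma child {c : V} (h : IsSearchSubtree G par S r) (hc : par c = some r) :
    IsSearchSubtree G par (compIn G (S \ {r}) c) c := by
  have hcS := h.child_mem hc
  have hrC : r ∉ compIn G (S \ {r}) c := fun hrC => (compIn_subset hcS hrC).2 rfl
  obtain ⟨_, _, ρ, _, -, hsub⟩ := h.isSearchTree
  have hT := hsub c hcS.1 hcS.2
  rw [← hT.eq_root_of_parent_notMem mem_compIn_self hc hrC] at hT
  exact h.component hcS hT hc

end IsSearchSubtree

/-- In a search tree on a tree `G`, if `v` has parent `p`, then at most
one child `c` of `v` satisfies `p ∈ ∂(T_c)`. -/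
theorem at_most_one_child_with_parent_in_bdry (G : SimpleGraph V) (hG : G.IsTree)
    (par : V → Option V) (r : V) (hroot : par r = none)
    (hT : IsSearchTree G par Set.univ r)
    (v p c c' : V) (hvp : par v = some p)
    (hc : par c = some v) (hc' : par c' = some v)
    (hpc : p ∈ bdry G par c) (hpc' : p ∈ bdry G par c') :
    c = c' := by
  obtain ⟨T, hTv⟩ := (IsSearchSubtree.univ hG.connected hroot hT).exists_of_mem (Set.mem_univ v)
  have hC := hTv.child hc
  have hC' := hTv.child hc'
  obtain ⟨-, u, hu, hpu⟩ := hpc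
  obtain ⟨-, u', hu', hpu'⟩ := hpc'
  have huC := hC.subtree_subset hu
  have hu'C' := hC'.subtree_subset hu'
  have huu' : u = u' := hG.isAcyclic.eq_of_adj_of_reachIn (hTv.parent_root_notMem hvp) hpu hpu'
    (hTv.reachIn_of_mem (compIn_subset (hTv.child_mem hc) huC).1
      (compIn_subset (hTv.child_mem hc') hu'C').1)
  have hCC' : compIn G (T \ {v}) c = compIn G (T \ {v}) c' := by
    rw [← compIn_eq_of_mem huC, ← compIn_eq_of_mem hu'C', huu']
  have hc'C : c' ∈ compIn G (T \ {v}) c := hCC' ▸ mem_compIn_self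
  exact (hC.isSearchTree.eq_root_of_parent_notMem hc'C hc' (hC.parent_root_notMem hc)).symm
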